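/- Let $(R,\mathfrak{m})$ be a Noetherian local ring and let $M$ be an $R$-module that is complete in the $\mathfrak{m}$-adic topology. Let $x \in \mathfrak{m}$ be a nonzerodivisor on both $R$ and $M$, and let $0 \to T \to F \to M \to 0$ be an exact sequence of $R$-modules in which $F$ is a complete flat $R$-module. Then both $T$ and $T/xT$ are complete in their $\mathfrak{m}$-adic topologies. -/

import Mathlib

/- Background definitions: Ext and Tor groups of modules, the invariant `p^R(M,N)`,
the invariant `ξ(R)`, Gorenstein / regular / complete intersection local rings. -/

noncomputable section

open CategoryTheory Opposite IsLocalRing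

universe u

/-- The `i`-th Ext group `Ext^i_R(M,N)` of two `R`-modules, as an object of `ModuleCat R`. -/
abbrev ExtMod (R : Type u) [CommRing R] (M N : Type u) [AddCommGroup M] [Module R M]
    [AddCommGroup N] [Module R N] (i : ℕ) : ModuleCat.{u} R :=
  ((_root_.Ext R (ModuleCat.{u} R) i).obj (op (ModuleCat.of R M))).obj (ModuleCat.of R N)

/-- The `i`-th Tor group `Tor_i^R(M,N)` of two `R`-modules, as an object of `ModuleCat R`. -/
abbrev TorMod (R : Type u) [CommRing R] (M N : Type u) [AddCommGroup M] [Module R M]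
    [AddCommGroup N] [Module R N] (i : ℕ) : ModuleCat.{u} R :=
  ((Tor (ModuleCat.{u} R) i).obj (ModuleCat.of R M)).obj (ModuleCat.of R N)

/-- `p^R(M,N) = sup { i ∈ ℕ | Ext^i_R(M,N) ≠ 0 }`, as an extended natural number. -/
noncomputable def pExt (R : Type u) [CommRing R] (M N : Type u) [AddCommGroup M] [Module R M]
    [AddCommGroup N] [Module R N] : ℕ∞ :=
  sSup {n : ℕ∞ | ∃ i : ℕ, n = i ∧ Nontrivial (ExtMod R M N i)}

/-- `ξ(R)`: the supremum of the finite values of `p^R(M,N)` over pairs of nonzero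
`R`-modules `(M, N)` with `M` finitely generated and `N` arbitrary. -/
noncomputable def xi (R : Type u) [CommRing R] : ℕ∞ :=
  sSup {n : ℕ∞ | n ≠ ⊤ ∧ ∃ M N : ModuleCat.{u} R, Nontrivial M ∧ Nontrivial N ∧
    Module.Finite R M ∧ pExt R M N = n}

/-- `R` has injective dimension at most `n` as a module over itself: `Ext^i_R(M,R) = 0`
for every `R`-module `M` and every `i > n`. -/
def SelfInjDimLE (R : Type u) [CommRing R] (n : ℕ) : Prop :=
  ∀ (M : ModuleCat.{u} R) (i : ℕ), n < i → Subsingleton (ExtMod R M R i)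

/-- A Gorenstein local ring: a commutative Noetherian local ring of finite injective
dimension as a module over itself. -/
def IsGorensteinLocalRing (R : Type u) [CommRing R] : Prop :=
  IsNoetherianRing R ∧ IsLocalRing R ∧ ∃ n : ℕ, SelfInjDimLE R n

/-- A regular local ring: a commutative Noetherian local ring whose maximal ideal can be
generated by `dim R` elements. -/
def IsRegularLocalRing' (R : Type u) [CommRing R] : Prop :=
  IsNoetherianRing R ∧ ∃ _ : IsLocalRing R, ∃ s : Finset R,
    Ideal.span (s : Set R) = maximalIdeal R ∧ (s.card : WithBot ℕ∞) = ringKrullDim R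

/-- A complete intersection local ring: a commutative Noetherian local ring whose
`𝔪`-adic completion is the quotient of a regular local ring by an ideal generated by a
regular sequence. -/
def IsCompleteIntersectionLocalRing (R : Type u) [CommRing R] : Prop :=
  IsNoetherianRing R ∧ ∃ _ : IsLocalRing R, ∃ (Q : Type u) (_ : CommRing Q)
    (rs : List Q), IsRegularLocalRing' Q ∧ RingTheory.Sequence.IsRegular Q rs ∧
    Nonempty (AdicCompletion (maximalIdeal R) R ≃+* (Q ⧸ Ideal.span {x | x ∈ rs}))

/-!
`T` is Hausdorff as a submodule of the Hausdorff module `F`. For precompleteness, since `𝔪` is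
finitely generated it suffices to solve, for each `c ∈ 𝔪` and each sequence `b` in `T`, the
recursion `a n = b n + c • a (n + 1)` (think `a n = ∑ⱼ cʲ • b (n + j)`). Solving it in the
complete module `F` gives a sequence with `g (a n) = c • g (a (n + 1))`, so each `g (a n)` lies in
`⋂ₖ cᵏ • M = 0` and the solution lies in `T`.

`T ⧸ x • T` is precomplete as a quotient of `T`. It is Hausdorff because `x • F` is closed in `F`:
Artin–Rees for `x • R ⊆ R` and flatness of `F` give `x • v ∈ 𝔪ⁿ⁺ᵏ • F → v ∈ 𝔪ⁿ • F`, so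
approximate `x`-divisors converge; and `f⁻¹ (x • F) = x • T` because `x` is regular on `M`.
-/

open Pointwise

section Adic

variable {R : Type*} [CommRing R] {I : Ideal R} {N P : Type*} [AddCommGroup N] [Module R N]
  [AddCommGroup P] [Module R P]

theorem IsHausdorff.of_injective [IsHausdorff I P] (f : N →ₗ[R] P) (hf : Function.Injective f) :
    IsHausdorff I N where
  haus' y hy := hf <| (IsHausdorff.haus ‹_› (f y) fun n => by
    have := (hy n).map f
    rw [map_zero, Submodule.map_smul'', Submodule.map_top] at this
    exact this.mono (Submodule.smul_mono le_rfl le_top)).trans (map_zero f).symm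

theorem IsPrecomplete.of_surjective [IsPrecomplete I N] (f : N →ₗ[R] P)
    (hf : Function.Surjective f) : IsPrecomplete I P := by
  rw [← AdicCompletion.of_surjective_iff]
  intro y
  obtain ⟨z, rfl⟩ := AdicCompletion.map_surjective I hf y
  obtain ⟨x, rfl⟩ := AdicCompletion.of_surjective I N z
  exact ⟨f x, (AdicCompletion.map_of I f x).symm⟩

theorem Submodule.isHausdorff_quotient (U : Submodule R N)
    (hU : ∀ y, (∀ n, y ∈ U ⊔ I ^ n • ⊤) → y ∈ U) : IsHausdorff I (N ⧸ U) where
  haus' q hq := by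
    obtain ⟨y, rfl⟩ := U.mkQ_surjective q
    refine (Submodule.Quotient.mk_eq_zero U).mpr (hU y fun n => ?_)
    have := SModEq.zero.mp (hq n)
    rwa [← Submodule.comap_map_mkQ, Submodule.mem_comap, Submodule.map_smul'',
      Submodule.map_top, Submodule.range_mkQ]

theorem sub_mem_pow_smul_top_of_le {a : ℕ → N}
    (ha : ∀ n, a (n + 1) - a n ∈ (I ^ n • ⊤ : Submodule R N)) {m n : ℕ} (hmn : m ≤ n) :
    a n - a m ∈ (I ^ m • ⊤ : Submodule R N) := by
  induction n, hmn using Nat.le_induction with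
  | base => simp
  | succ n hmn ih =>
    rw [← sub_add_sub_cancel]
    exact add_mem (Submodule.smul_mono_left (Ideal.pow_le_pow_right hmn) (ha n)) ih

theorem IsPrecomplete.exists_sub_mem [IsPrecomplete I N] {a : ℕ → N}
    (ha : ∀ n, a (n + 1) - a n ∈ (I ^ n • ⊤ : Submodule R N)) :
    ∃ L, ∀ n, a n - L ∈ (I ^ n • ⊤ : Submodule R N) := by
  obtain ⟨L, hL⟩ := IsPrecomplete.prec ‹_› fun {m n} hmn =>
    SModEq.sub_mem.mpr (neg_sub (a n) (a m) ▸ neg_mem (sub_mem_pow_smul_top_of_le ha hmn))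
  exact ⟨L, fun n => SModEq.sub_mem.mp (hL n)⟩

theorem IsPrecomplete.of_exists_sub_mem
    (h : ∀ a : ℕ → N, (∀ n, a (n + 1) - a n ∈ (I ^ n • ⊤ : Submodule R N)) →
      ∃ L, ∀ n, ∃ m ≥ n, a m - L ∈ (I ^ n • ⊤ : Submodule R N)) :
    IsPrecomplete I N where
  prec' a ha := by
    have hsucc : ∀ n, a (n + 1) - a n ∈ (I ^ n • ⊤ : Submodule R N) := fun n =>
      neg_sub (a n) (a (n + 1)) ▸ neg_mem (SModEq.sub_mem.mp (ha n.le_succ))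
    obtain ⟨L, hL⟩ := h a hsucc
    refine ⟨L, fun n => SModEq.sub_mem.mpr ?_⟩
    obtain ⟨m, hnm, hm⟩ := hL n
    rw [← sub_add_sub_cancel _ (a m)]
    exact add_mem (neg_sub (a m) (a n) ▸ neg_mem (sub_mem_pow_smul_top_of_le hsucc hnm)) hm

end Adic

section TailSums

variable {R : Type*} [CommRing R]

/-- `a n` plays the role of `∑ j, c ^ j • b (n + j)`. -/
def HasTailSums (c : R) (N : Type*) [AddCommGroup N] [Module R N] : Prop :=
  ∀ b : ℕ → N, ∃ a : ℕ → N, ∀ n, a n = b n + c • a (n + 1)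

variable {I : Ideal R} {N : Type*} [AddCommGroup N] [Module R N]

theorem eq_zero_of_forall_eq_smul_succ [IsHausdorff I N] {c : R} (hc : c ∈ I) {a : ℕ → N}
    (ha : ∀ n, a n = c • a (n + 1)) (n : ℕ) : a n = 0 := by
  have hpow : ∀ k, a n = c ^ k • a (n + k) := by
    intro k
    induction k with
    | zero => simp
    | succ k ih => rw [ih, ha (n + k), smul_smul, ← pow_succ, ← add_assoc]
  refine IsHausdorff.haus ‹_› (a n) fun k => SModEq.zero.mpr ?_
  rw [hpow k]
  exact Submodule.smul_mem_smul (Ideal.pow_mem_pow hc k) Submodule.mem_top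

theorem hasTailSums_of_isAdicComplete [IsAdicComplete I N] {c : R} (hc : c ∈ I) :
    HasTailSums c N := by
  intro b
  let p (n k : ℕ) : N := ∑ j ∈ Finset.range k, c ^ j • b (n + j)
  have hp : ∀ n k, p n (k + 1) = b n + c • p (n + 1) k := fun n k => by
    simp only [p, Finset.sum_range_succ', Finset.smul_sum, smul_smul, ← pow_succ']
    rw [add_comm]
    congr 1
    · simp
    · exact Finset.sum_congr rfl fun j _ => by rw [add_right_comm, add_assoc]
  have hlim : ∀ n, ∃ L, ∀ k, p n k - L ∈ (I ^ k • ⊤ : Submodule R N) := fun n =>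
    IsPrecomplete.exists_sub_mem fun k => by
      simpa [p, Finset.sum_range_succ] using
        Submodule.smul_mem_smul (Ideal.pow_mem_pow hc k) (Submodule.mem_top (x := b (n + k)))
  choose a ha using hlim
  refine ⟨a, fun n => sub_eq_zero.mp <|
    IsHausdorff.haus (I := I) inferInstance _ fun k => SModEq.zero.mpr ?_⟩
  have hsplit : a n - (b n + c • a (n + 1)) =
      c • (p (n + 1) k - a (n + 1)) - (p n (k + 1) - a n) := by
    rw [hp, smul_sub]; abel
  rw [hsplit]
  exact sub_mem (Submodule.smul_mem _ c (ha (n + 1) k))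
    (Submodule.smul_mono_left (Ideal.pow_le_pow_right k.le_succ) (ha n (k + 1)))

theorem HasTailSums.of_exact {T F M : Type*} [AddCommGroup T] [Module R T] [AddCommGroup F]
    [Module R F] [AddCommGroup M] [Module R M] [IsHausdorff I M] {f : T →ₗ[R] F} {g : F →ₗ[R] M}
    (hf : Function.Injective f) (hfg : Function.Exact f g) {c : R} (hc : c ∈ I)
    (hF : HasTailSums c F) : HasTailSums c T := by
  intro b
  obtain ⟨A, hA⟩ := hF (f ∘ b)
  have hgA : ∀ n, g (A n) = 0 := eq_zero_of_forall_eq_smul_succ hc fun n => by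
    rw [hA n, map_add, map_smul, Function.comp_apply, hfg.apply_apply_eq_zero, zero_add]
  choose a ha using fun n => (hfg (A n)).mp (hgA n)
  exact ⟨a, fun n => hf (by rw [map_add, map_smul, ha, ha, hA, Function.comp_apply])⟩

end TailSums

section FinitelyGenerated

variable {R : Type*} [CommRing R] {N : Type*} [AddCommGroup N] [Module R N]

/-- Since `(span {c} ⊔ B) ^ (2 * m) ≤ span {c ^ m} ⊔ B ^ m`, a series converging
`(span {c} ⊔ B)`-adically splits, after grouping its terms in pairs, into a `c`-adic tail sum
and a `B`-adic series. -/
theorem IsPrecomplete.sup_span_singleton {B : Ideal R} [IsPrecomplete B N] {c : R}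
    (hc : HasTailSums c N) : IsPrecomplete (Ideal.span {c} ⊔ B) N := by
  refine IsPrecomplete.of_exists_sub_mem fun f hf => ?_
  have hsplit : ∀ m, ∃ p q, q ∈ (B ^ m • ⊤ : Submodule R N) ∧
      f (2 * m + 2) - f (2 * m) = c ^ m • p + q := by
    intro m
    have hmem : f (2 * m + 2) - f (2 * m) ∈
        ((Ideal.span {c} ⊔ B) ^ (m + m) • ⊤ : Submodule R N) := by
      rw [← two_mul]
      exact sub_mem_pow_smul_top_of_le hf (by omega)
    replace hmem := Submodule.smul_mono_left Ideal.sup_pow_add_le_pow_sup_pow hmem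
    rw [Submodule.sup_smul, Ideal.span_singleton_pow,
      Submodule.ideal_span_singleton_smul] at hmem
    obtain ⟨u, hu, q, hq, huq⟩ := Submodule.mem_sup.mp hmem
    obtain ⟨p, -, rfl⟩ := (Submodule.mem_smul_pointwise_iff_exists _ _ _).mp hu
    exact ⟨p, q, hq, huq.symm⟩
  choose p q hq hpq using hsplit
  obtain ⟨A, hA⟩ := hc p
  obtain ⟨Q, hQ⟩ := IsPrecomplete.exists_sub_mem (I := B)
    (a := fun m => ∑ i ∈ Finset.range m, q i) fun m => by simpa [Finset.sum_range_succ] using hq m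
  have heven : ∀ m, f (2 * m) = f 0 + (A 0 - c ^ m • A m) + ∑ i ∈ Finset.range m, q i := by
    intro m
    induction m with
    | zero => simp
    | succ m ih =>
      rw [show 2 * (m + 1) = 2 * m + 2 by ring, ← sub_add_cancel (f (2 * m + 2)) (f (2 * m)),
        hpq, ih, hA m, smul_add, smul_smul, ← pow_succ, Finset.sum_range_succ]
      abel
  refine ⟨f 0 + A 0 + Q, fun n => ⟨2 * n, by omega, ?_⟩⟩
  rw [heven, show ∀ a b s : N, f 0 + (A 0 - a) + s - (f 0 + A 0 + b) = (s - b) - a by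
    intros; abel]
  exact sub_mem (Submodule.smul_mono_left (Ideal.pow_right_mono le_sup_right n) (hQ n))
    (Submodule.smul_mem_smul (Ideal.pow_mem_pow (Ideal.mem_sup_left
      (Ideal.mem_span_singleton_self c)) n) Submodule.mem_top)

theorem isPrecomplete_span_finset (s : Finset R) (hs : ∀ c ∈ s, HasTailSums c N) :
    IsPrecomplete (Ideal.span (s : Set R)) N := by
  classical
  induction s using Finset.induction_on with
  | empty => simpa using IsPrecomplete.bot (M := N)
  | insert c s _ ih =>
    have := ih fun d hd => hs d (Finset.mem_insert_of_mem hd)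
    rw [Finset.coe_insert, Ideal.span_insert]
    exact IsPrecomplete.sup_span_singleton (hs c (Finset.mem_insert_self c s))

theorem IsPrecomplete.of_fg {I : Ideal R} (hI : I.FG) (h : ∀ c ∈ I, HasTailSums c N) :
    IsPrecomplete I N := by
  obtain ⟨s, rfl⟩ := hI
  exact isPrecomplete_span_finset s fun c hc => h c (Ideal.subset_span hc)

end FinitelyGenerated

section Flat

variable {R : Type*} [CommRing R] {F : Type*} [AddCommGroup F] [Module R F]

/-- Tensoring the injection `R ⧸ (J : c) → R ⧸ J`, `r ↦ c * r`, with the flat module `F`. -/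
theorem Module.Flat.mem_colon_smul_top_of_smul_mem [Module.Flat R F] {J : Ideal R} {c : R}
    {v : F} (h : c • v ∈ (J • ⊤ : Submodule R F)) :
    v ∈ (J.colon {c} • ⊤ : Submodule R F) := by
  have hcomap : Submodule.comap (c • LinearMap.id) J = J.colon {c} := by
    ext r
    simp [Submodule.mem_colon_singleton, mul_comm]
  let φ : (R ⧸ J.colon {c}) →ₗ[R] R ⧸ J := Submodule.mapQ _ J (c • LinearMap.id) hcomap.ge
  have hφ : Function.Injective (φ.lTensor F) := by
    refine Module.Flat.lTensor_preserves_injective_linearMap φ ?_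
    rw [← LinearMap.ker_eq_bot, Submodule.ker_mapQ, hcomap, Submodule.mkQ_map_self]
  have hv : v ⊗ₜ[R] Ideal.Quotient.mk (J.colon {c}) 1 = 0 := hφ <| by
    apply (TensorProduct.tensorQuotEquivQuotSMul F J).injective
    rw [LinearMap.lTensor_tmul, map_zero, map_zero, ← Ideal.Quotient.mk_eq_mk,
      Submodule.mapQ_apply]
    simp only [smul_eq_mul, mul_one, LinearMap.smul_apply, LinearMap.id_apply]
    rw [Ideal.Quotient.mk_eq_mk, TensorProduct.tensorQuotEquivQuotSMul_tmul_mk,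
      Submodule.Quotient.mk_eq_zero]
    exact h
  have := congrArg (TensorProduct.tensorQuotEquivQuotSMul F _) hv
  rwa [TensorProduct.tensorQuotEquivQuotSMul_tmul_mk, one_smul, map_zero,
    Submodule.Quotient.mk_eq_zero] at this

/-- Artin–Rees for `span {x} ⊆ R`. -/
theorem Ideal.exists_colon_pow_le [IsNoetherianRing R] (I : Ideal R) {x : R}
    (hx : IsSMulRegular R x) : ∃ k, ∀ n, (I ^ (n + k)).colon {x} ≤ I ^ n := by
  obtain ⟨k, hk⟩ := Ideal.exists_pow_inf_eq_pow_smul I (Ideal.span {x})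
  refine ⟨k, fun n r hr => ?_⟩
  have hrx : x * r ∈ (I ^ (n + k) • ⊤ ⊓ Ideal.span {x} : Ideal R) := by
    refine ⟨?_, Ideal.mul_mem_right _ _ (Ideal.mem_span_singleton_self x)⟩
    rw [Ideal.smul_eq_mul, Ideal.mul_top, mul_comm]
    exact Submodule.mem_colon_singleton.mp hr
  rw [hk _ le_add_self, Nat.add_sub_cancel] at hrx
  replace hrx : x * r ∈ Ideal.span {x} * I ^ n := by
    rw [mul_comm (Ideal.span {x}), ← Ideal.smul_eq_mul]
    exact Submodule.smul_mono le_rfl inf_le_right hrx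
  obtain ⟨s, hs, hsx⟩ := Ideal.mem_span_singleton_mul.mp hrx
  exact hx (show x • s = x • r from hsx) ▸ hs

theorem mem_smul_top_of_forall_mem_sup [IsNoetherianRing R] {I : Ideal R} [Module.Flat R F]
    [IsAdicComplete I F] {x : R} (hx : IsSMulRegular R x) {y : F}
    (hy : ∀ n, y ∈ (x • ⊤ ⊔ I ^ n • ⊤ : Submodule R F)) : y ∈ (x • ⊤ : Submodule R F) := by
  obtain ⟨k, hk⟩ := I.exists_colon_pow_le hx
  have hcancel : ∀ n (v : F), x • v ∈ (I ^ (n + k) • ⊤ : Submodule R F) →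
      v ∈ (I ^ n • ⊤ : Submodule R F) := fun n v hv =>
    Submodule.smul_mono_left (hk n) (Module.Flat.mem_colon_smul_top_of_smul_mem hv)
  have happrox : ∀ n, ∃ a : F, y - x • a ∈ (I ^ n • ⊤ : Submodule R F) := fun n => by
    obtain ⟨u, hu, z, hz, rfl⟩ := Submodule.mem_sup.mp (hy n)
    obtain ⟨a, -, rfl⟩ := (Submodule.mem_smul_pointwise_iff_exists _ _ _).mp hu
    exact ⟨a, by simpa using hz⟩
  choose a ha using happrox
  obtain ⟨L, hL⟩ := IsPrecomplete.exists_sub_mem (I := I) (a := fun n => a (n + k)) fun n =>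
    hcancel n _ <| by
      rw [smul_sub, show ∀ u v : F, x • u - x • v = (y - x • v) - (y - x • u) by intros; abel]
      exact sub_mem (ha _)
        (Submodule.smul_mono_left (Ideal.pow_le_pow_right (by omega)) (ha _))
  have hyL : y = x • L :=
      sub_eq_zero.mp <| IsHausdorff.haus (I := I) inferInstance _ fun n => by
    rw [SModEq.zero, show y - x • L = (y - x • a (n + k)) + x • (a (n + k) - L) by
      rw [smul_sub]; abel]
    exact add_mem (Submodule.smul_mono_left (Ideal.pow_le_pow_right (by omega)) (ha _))
      (Submodule.smul_mem _ x (hL n))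
  exact hyL ▸ Submodule.smul_mem_pointwise_smul L x ⊤ Submodule.mem_top

end Flat

section Exact

variable {R : Type*} [CommRing R] {I : Ideal R} {T F M : Type*} [AddCommGroup T] [Module R T]
  [AddCommGroup F] [Module R F] [AddCommGroup M] [Module R M] {f : T →ₗ[R] F} {g : F →ₗ[R] M}

theorem IsAdicComplete.of_exact [IsAdicComplete I F] [IsHausdorff I M] (hI : I.FG)
    (hf : Function.Injective f) (hfg : Function.Exact f g) : IsAdicComplete I T where
  toIsHausdorff := .of_injective f hf
  toIsPrecomplete := .of_fg hI fun _ hc => (hasTailSums_of_isAdicComplete hc).of_exact hf hfg hc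

theorem mem_smul_top_of_apply_mem_smul_top (hf : Function.Injective f) (hfg : Function.Exact f g)
    {x : R} (hx : IsSMulRegular M x) {t : T} (ht : f t ∈ (x • ⊤ : Submodule R F)) :
    t ∈ (x • ⊤ : Submodule R T) := by
  obtain ⟨w, -, hw⟩ := (Submodule.mem_smul_pointwise_iff_exists _ _ _).mp ht
  have hgw : g w = 0 := hx <| show x • g w = x • 0 by
    rw [smul_zero, ← map_smul, hw, hfg.apply_apply_eq_zero]
  obtain ⟨s, rfl⟩ := (hfg w).mp hgw
  rw [← hf (by rw [map_smul, hw] : f (x • s) = f t)]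
  exact Submodule.smul_mem_pointwise_smul s x ⊤ Submodule.mem_top

theorem isHausdorff_quotSMulTop_of_exact (hf : Function.Injective f) (hfg : Function.Exact f g)
    {x : R} (hx : IsSMulRegular M x)
    (hF : ∀ y : F, (∀ n, y ∈ (x • ⊤ ⊔ I ^ n • ⊤ : Submodule R F)) →
      y ∈ (x • ⊤ : Submodule R F)) :
    IsHausdorff I (QuotSMulTop x T) :=
  Submodule.isHausdorff_quotient _ fun t ht => mem_smul_top_of_apply_mem_smul_top hf hfg hx <|
    hF _ fun n => by
      have := Submodule.mem_map_of_mem (f := f) (ht n)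
      rw [Submodule.map_sup, Submodule.map_pointwise_smul, Submodule.map_smul'',
        Submodule.map_top] at this
      refine (sup_le_sup ?_ ?_ : _ ≤ (x • ⊤ ⊔ I ^ n • ⊤ : Submodule R F)) this
      · exact smul_le_smul_left x le_top
      · exact Submodule.smul_mono le_rfl le_top

end Exact

theorem complete_syzygy_general (R : Type u) [CommRing R] [IsNoetherianRing R] [IsLocalRing R]
    (M : Type u) [AddCommGroup M] [Module R M] [IsAdicComplete (maximalIdeal R) M]
    (x : R) (hxR : IsSMulRegular R x) (hxM : IsSMulRegular M x)
    (T F : Type u) [AddCommGroup T] [Module R T] [AddCommGroup F] [Module R F]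
    [Module.Flat R F] [IsAdicComplete (maximalIdeal R) F]
    (f : T →ₗ[R] F) (g : F →ₗ[R] M)
    (hf : Function.Injective f) (hfg : Function.Exact f g) :
    IsAdicComplete (maximalIdeal R) T ∧
      IsAdicComplete (maximalIdeal R) (QuotSMulTop x T) := by
  have hT : IsAdicComplete (maximalIdeal R) T := .of_exact (IsNoetherian.noetherian _) hf hfg
  exact ⟨hT,
    { toIsHausdorff := isHausdorff_quotSMulTop_of_exact hf hfg hxM fun _ =>
        mem_smul_top_of_forall_mem_sup hxR
      toIsPrecomplete := .of_surjective _ (Submodule.mkQ_surjective _) }⟩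

/-- Let `(R,𝔪)` be a Noetherian local ring, `M` a complete `R`-module, and `x ∈ 𝔪` a
nonzerodivisor on both `R` and `M`. Given a short exact sequence `0 → T → F → M → 0`
with `F` a complete flat `R`-module, both `T` and `T/xT` are complete. -/
theorem complete_syzygy (R : Type u) [CommRing R] [IsNoetherianRing R] [IsLocalRing R]
    (M : Type u) [AddCommGroup M] [Module R M] [IsAdicComplete (maximalIdeal R) M]
    (x : R) (hx : x ∈ maximalIdeal R) (hxR : IsSMulRegular R x) (hxM : IsSMulRegular M x)
    (T F : Type u) [AddCommGroup T] [Module R T] [AddCommGroup F] [Module R F]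
    [Module.Flat R F] [IsAdicComplete (maximalIdeal R) F]
    (f : T →ₗ[R] F) (g : F →ₗ[R] M)
    (hf : Function.Injective f) (hg : Function.Surjective g) (hfg : Function.Exact f g) :
    IsAdicComplete (maximalIdeal R) T ∧
      IsAdicComplete (maximalIdeal R) (QuotSMulTop x T) :=
  complete_syzygy_general R M x hxR hxM T F f g hf hfg
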